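/- arXiv:2510.13047 — 3 statements merged into one kernel-verified Lean document; each statement's English description precedes it below -/
import Mathlib

section
/- Let d ≥ 1, Kn > 0, and let f : ℝ^d → ℝ be measurable and strictly positive, integrable with finite second moment, with density ρ > 0, bulk velocity u, and temperature T > 0 defined from its moments, and let M[f] be the associated Maxwellian. Assume that f·|ln f|, M[f]·|ln f|, f·|ln M[f]|, and M[f]·|ln M[f]| are all integrable. Then the H-theorem inequality holds for the BGK operator: ∫_{ℝ^d} Q_BGK(f)(v) ln f(v) dv ≤ 0, where Q_BGK(f)(v) = (M[f](v) − f(v))/Kn. -/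
open MeasureTheory Real Set


lemma gauss1d_sq {b : ℝ} (hb : 0 < b) :
    ∫ x : ℝ, x ^ 2 * rexp (-b * x ^ 2) = (1 / (2 * b)) * Real.sqrt (π / b) := by
  have h1 : ∫ x : ℝ, x ^ 2 * rexp (-b * x ^ 2)
      = 2 * ∫ x in Ioi (0:ℝ), x ^ 2 * rexp (-b * x ^ 2) := by
    rw [← integral_comp_abs (f := fun x => x ^ 2 * rexp (-b * x ^ 2))]
    congr 1 with x
    rw [sq_abs]
  have h2 : ∫ x in Ioi (0:ℝ), x ^ 2 * rexp (-b * x ^ 2)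
      = ∫ y in Ioi (0:ℝ), ((1:ℝ)/2) * (y ^ ((1:ℝ)/2) * rexp (-(b * y))) := by
    rw [← integral_comp_rpow_Ioi_of_pos (p := 2)
      (g := fun y => ((1:ℝ)/2) * (y ^ ((1:ℝ)/2) * rexp (-(b * y)))) two_pos]
    refine setIntegral_congr_fun measurableSet_Ioi (fun x hx => ?_)
    have hx0 : (0:ℝ) < x := hx
    have hx2 : x ^ (2:ℝ) = x ^ 2 := by rw [← Real.rpow_natCast x 2]; norm_num
    rw [hx2]
    have : (x ^ 2 : ℝ) ^ ((1:ℝ)/2) = x := by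
      rw [← Real.rpow_natCast x 2, ← Real.rpow_mul hx0.le]
      norm_num
    rw [this]
    have h1 : x ^ ((2:ℝ) - 1) = x := by
      norm_num
    rw [h1]
    simp only [smul_eq_mul]
    ring_nf
  have h3 : ∫ y in Ioi (0:ℝ), y ^ ((1:ℝ)/2) * rexp (-(b * y))
      = (1 / b) ^ ((3:ℝ)/2) * Real.Gamma (3/2) := by
    have := integral_rpow_mul_exp_neg_mul_Ioi (a := 3/2) (r := b) (by norm_num) hb
    convert this using 3
    norm_num
  have hG : Real.Gamma (3/2) = Real.sqrt π / 2 := by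
    have : (3:ℝ)/2 = 1/2 + 1 := by norm_num
    rw [this, Real.Gamma_add_one (by norm_num), Real.Gamma_one_half_eq]
    ring
  rw [h1, h2, integral_const_mul, h3, hG]
  have hsq : Real.sqrt (π / b) = (π / b) ^ ((1:ℝ)/2) := Real.sqrt_eq_rpow _
  have hb' : (0:ℝ) < 1 / b := by positivity
  have e1 : (1 / b : ℝ) ^ ((3:ℝ)/2) = (1/b) * (1/b) ^ ((1:ℝ)/2) := by
    rw [← Real.rpow_one_add' (by positivity) (by norm_num)]
    norm_num
  have e2 : (π / b : ℝ) ^ ((1:ℝ)/2) = π ^ ((1:ℝ)/2) * (1/b) ^ ((1:ℝ)/2) := by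
    rw [← Real.mul_rpow pi_pos.le hb'.le]
    ring_nf
  have e3 : Real.sqrt π = π ^ ((1:ℝ)/2) := Real.sqrt_eq_rpow _
  rw [hsq, e1, e2, e3]
  ring

variable {d : ℕ}

lemma gaussE_norm_eq (x : Fin d → ℝ) :
    ‖(MeasurableEquiv.toLp 2 (Fin d → ℝ)) x‖ ^ 2 = ∑ i, (x i) ^ 2 := by
  simp only [MeasurableEquiv.toLp_apply,
    EuclideanSpace.norm_eq, PiLp.toLp_apply, Real.norm_eq_abs, sq_abs]
  rw [sq_sqrt]
  exact Finset.sum_nonneg (fun i _ => by positivity)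

lemma gaussE_integral_comp (F : EuclideanSpace ℝ (Fin d) → ℝ) :
    ∫ v : EuclideanSpace ℝ (Fin d), F v
      = ∫ x : Fin d → ℝ, F ((MeasurableEquiv.toLp 2 (Fin d → ℝ)) x) := by
  rw [← ((EuclideanSpace.volume_preserving_symm_measurableEquiv_toLp (Fin d)).symm).integral_comp
    (MeasurableEquiv.measurableEmbedding _)]
  rfl

lemma gaussE_integrable_iff (F : EuclideanSpace ℝ (Fin d) → ℝ) :
    Integrable (fun x : Fin d → ℝ => F ((MeasurableEquiv.toLp 2 (Fin d → ℝ)) x))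
      ↔ Integrable F := by
  exact ((EuclideanSpace.volume_preserving_symm_measurableEquiv_toLp (Fin d)).symm).integrable_comp_emb
    (MeasurableEquiv.measurableEmbedding _)

lemma integrable_exp_E {b : ℝ} (hb : 0 < b) :
    Integrable (fun v : EuclideanSpace ℝ (Fin d) => rexp (-b * ‖v‖ ^ 2)) := by
  rw [← gaussE_integrable_iff]
  have : (fun x : Fin d → ℝ => rexp (-b * ‖(MeasurableEquiv.toLp 2 (Fin d → ℝ)) x‖ ^ 2))
      = fun x => ∏ i, rexp (-b * (x i) ^ 2) := by
    funext x
    rw [gaussE_norm_eq, ← Real.exp_sum]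
    congr 1
    rw [Finset.mul_sum]
  rw [this]
  exact Integrable.fintype_prod (fun i => integrable_exp_neg_mul_sq hb)

lemma integrable_sq_exp_E {b : ℝ} (hb : 0 < b) :
    Integrable (fun v : EuclideanSpace ℝ (Fin d) => ‖v‖ ^ 2 * rexp (-b * ‖v‖ ^ 2)) := by
  rw [← gaussE_integrable_iff]
  have : (fun x : Fin d → ℝ => ‖(MeasurableEquiv.toLp 2 (Fin d → ℝ)) x‖ ^ 2
        * rexp (-b * ‖(MeasurableEquiv.toLp 2 (Fin d → ℝ)) x‖ ^ 2))
      = fun x => ∑ i, ∏ j, ((if j = i then (x j) ^ 2 else 1) * rexp (-b * (x j) ^ 2)) := by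
    funext x
    rw [gaussE_norm_eq, Finset.sum_mul]
    congr 1 with i
    rw [Finset.prod_mul_distrib, ← Real.exp_sum]
    have h1 : (∏ j, if j = i then (x j) ^ 2 else 1) = (x i) ^ 2 := by
      simp [Finset.prod_ite_eq']
    rw [h1]
    congr 1
    rw [Finset.mul_sum]
  rw [this]
  apply integrable_finset_sum
  intro i _
  apply Integrable.fintype_prod (f := fun j y => (if j = i then y ^ 2 else 1) * rexp (-b * y ^ 2))
  intro j
  by_cases h : j = i
  · simp only [h, if_true]
    have := integrable_rpow_mul_exp_neg_mul_sq hb (s := 2) (by norm_num)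
    convert this using 2 with x
    rw [← Real.rpow_natCast x 2]
    norm_num
  · simp only [h, if_false, one_mul]
    exact integrable_exp_neg_mul_sq hb

lemma sq_exp_decomp {b : ℝ} :
    (fun x : Fin d → ℝ => ‖(MeasurableEquiv.toLp 2 (Fin d → ℝ)) x‖ ^ 2
        * rexp (-b * ‖(MeasurableEquiv.toLp 2 (Fin d → ℝ)) x‖ ^ 2))
      = fun x => ∑ i, ∏ j, ((if j = i then (x j) ^ 2 else 1) * rexp (-b * (x j) ^ 2)) := by
  funext x
  rw [gaussE_norm_eq, Finset.sum_mul]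
  congr 1 with i
  rw [Finset.prod_mul_distrib, ← Real.exp_sum]
  have h1 : (∏ j, if j = i then (x j) ^ 2 else 1) = (x i) ^ 2 := by
    simp [Finset.prod_ite_eq']
  rw [h1]
  congr 1
  rw [Finset.mul_sum]

lemma int_1d_term {b : ℝ} (hb : 0 < b) (h : Prop) [Decidable h] :
    Integrable (fun y : ℝ => (if h then y ^ 2 else 1) * rexp (-b * y ^ 2)) := by
  by_cases hh : h
  · simp only [hh, if_true]
    have := integrable_rpow_mul_exp_neg_mul_sq hb (s := 2) (by norm_num)
    convert this using 2 with x
    rw [← Real.rpow_natCast x 2]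
    norm_num
  · simp only [hh, if_false, one_mul]
    exact integrable_exp_neg_mul_sq hb

lemma gaussE_sq_val (hd : 1 ≤ d) {b : ℝ} (hb : 0 < b) :
    ∫ v : EuclideanSpace ℝ (Fin d), ‖v‖ ^ 2 * rexp (-b * ‖v‖ ^ 2)
      = ((d : ℝ) / (2 * b)) * (π / b) ^ ((d : ℝ) / 2) := by
  rw [gaussE_integral_comp (fun v => ‖v‖ ^ 2 * rexp (-b * ‖v‖ ^ 2))]
  rw [show (fun x : Fin d → ℝ => ‖(MeasurableEquiv.toLp 2 (Fin d → ℝ)) x‖ ^ 2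
        * rexp (-b * ‖(MeasurableEquiv.toLp 2 (Fin d → ℝ)) x‖ ^ 2))
      = fun x => ∑ i, ∏ j, ((if j = i then (x j) ^ 2 else 1) * rexp (-b * (x j) ^ 2))
    from sq_exp_decomp]
  rw [integral_finset_sum (μ := volume) _ (fun i _ =>
    Integrable.fintype_prod (f := fun j y => (if j = i then y ^ 2 else 1) * rexp (-b * y ^ 2))
      (fun j => int_1d_term hb _))]
  have hterm : ∀ i : Fin d,
      (∫ x : Fin d → ℝ, ∏ j, ((if j = i then (x j) ^ 2 else 1) * rexp (-b * (x j) ^ 2)))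
        = (1 / (2 * b)) * Real.sqrt (π / b) * Real.sqrt (π / b) ^ (d - 1) := by
    intro i
    rw [integral_fintype_prod_volume_eq_prod
      (f := fun j y => (if j = i then y ^ 2 else 1) * rexp (-b * y ^ 2))]
    rw [← Finset.mul_prod_erase Finset.univ _ (Finset.mem_univ i)]
    have h1 : (∫ y : ℝ, (if i = i then y ^ 2 else 1) * rexp (-b * y ^ 2))
        = (1 / (2 * b)) * Real.sqrt (π / b) := by
      simp only [if_pos rfl]
      exact gauss1d_sq hb
    have h2 : ∀ j ∈ Finset.univ.erase i,
        (∫ y : ℝ, (if j = i then y ^ 2 else 1) * rexp (-b * y ^ 2)) = Real.sqrt (π / b) := by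
      intro j hj
      simp only [if_neg (Finset.ne_of_mem_erase hj), one_mul]
      exact integral_gaussian b
    rw [h1, Finset.prod_congr rfl h2, Finset.prod_const, Finset.card_erase_of_mem
      (Finset.mem_univ i), Finset.card_univ, Fintype.card_fin]
  simp only [hterm, Finset.sum_const, Finset.card_univ, Fintype.card_fin, nsmul_eq_mul]
  have hI0 : (0:ℝ) ≤ Real.sqrt (π / b) := Real.sqrt_nonneg _
  have hpow : Real.sqrt (π / b) * Real.sqrt (π / b) ^ (d - 1) = (π / b) ^ ((d : ℝ) / 2) := by
    rw [← pow_succ', Nat.sub_add_cancel hd, Real.sqrt_eq_rpow, ← Real.rpow_natCast _ d,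
      ← Real.rpow_mul (by positivity)]
    ring_nf
  rw [← hpow]
  ring

lemma gaussE_val {d : ℕ} {b : ℝ} (hb : 0 < b) :
    ∫ v : EuclideanSpace ℝ (Fin d), rexp (-b * ‖v‖ ^ 2) = (π / b) ^ ((d : ℝ) / 2) := by
  rw [GaussianFourier.integral_rexp_neg_mul_sq_norm hb, finrank_euclideanSpace_fin]

/-- H-theorem inequality for the BGK operator:
`∫ Q_BGK(f) ln f dv ≤ 0` where `Q_BGK(f) = (M[f] − f)/Kn`. -/
theorem bgk_H_theorem
    (d : ℕ) (hd : 1 ≤ d) (Kn : ℝ) (hKn : 0 < Kn)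
    (f : EuclideanSpace ℝ (Fin d) → ℝ)
    (hf_meas : Measurable f)
    (hf_pos : ∀ v, 0 < f v)
    (hf_int : Integrable f)
    (hf_mom1 : Integrable (fun v : EuclideanSpace ℝ (Fin d) => f v • v))
    (hf_mom2 : Integrable (fun v : EuclideanSpace ℝ (Fin d) => ‖v‖ ^ 2 * f v))
    (ρ : ℝ) (u : EuclideanSpace ℝ (Fin d)) (T : ℝ)
    (hρ : ρ = ∫ v : EuclideanSpace ℝ (Fin d), f v)
    (hρ_pos : 0 < ρ)
    (hu : ρ • u = ∫ v : EuclideanSpace ℝ (Fin d), f v • v)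
    (hT : (1 / 2) * ρ * ‖u‖ ^ 2 + ((d : ℝ) / 2) * ρ * T
      = (1 / 2) * ∫ v : EuclideanSpace ℝ (Fin d), ‖v‖ ^ 2 * f v)
    (hT_pos : 0 < T)
    (M : EuclideanSpace ℝ (Fin d) → ℝ)
    (hM : ∀ v, M v = ρ * (2 * π * T) ^ (-(d : ℝ) / 2) * Real.exp (-‖v - u‖ ^ 2 / (2 * T)))
    (hint1 : Integrable (fun v => f v * |Real.log (f v)|))
    (hint2 : Integrable (fun v => M v * |Real.log (f v)|))
    (hint3 : Integrable (fun v => f v * |Real.log (M v)|))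
    (hint4 : Integrable (fun v => M v * |Real.log (M v)|)) :
    ∫ v : EuclideanSpace ℝ (Fin d), ((M v - f v) / Kn) * Real.log (f v) ≤ 0 := by
  set b : ℝ := 1 / (2 * T) with hbdef
  have hb : 0 < b := by positivity
  set c : ℝ := ρ * (2 * π * T) ^ (-(d : ℝ) / 2) with hcdef
  have h2πT : (0:ℝ) < 2 * π * T := by positivity
  have hc : 0 < c := by
    apply mul_pos hρ_pos
    exact Real.rpow_pos_of_pos h2πT _
  have hπb : π / b = 2 * π * T := by
    rw [hbdef]; field_simp
  have hcρ : c * (2 * π * T) ^ ((d:ℝ)/2) = ρ := by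
    rw [hcdef, mul_assoc, ← Real.rpow_add h2πT, show (-(d:ℝ)/2 + (d:ℝ)/2) = 0 by ring,
      Real.rpow_zero, mul_one]
  have hM' : ∀ v, M v = c * rexp (-b * ‖v - u‖ ^ 2) := by
    intro v
    rw [hM v, hcdef]
    congr 1
    rw [hbdef]
    congr 1
    field_simp
  have hM_pos : ∀ v, 0 < M v := fun v => by
    rw [hM' v]; positivity
  have hM_meas : Measurable M := by
    have : M = fun v => c * rexp (-b * ‖v - u‖ ^ 2) := funext hM'
    rw [this]
    fun_prop
  -- integrability of M and M * ‖v-u‖²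
  have hMint : Integrable M := by
    have : M = fun v => c * rexp (-b * ‖v - u‖ ^ 2) := funext hM'
    rw [this]
    exact ((integrable_exp_E hb).comp_sub_right u).const_mul c
  have hMsqint : Integrable (fun v => M v * ‖v - u‖ ^ 2) := by
    have : (fun v : EuclideanSpace ℝ (Fin d) => M v * ‖v - u‖ ^ 2)
        = fun v => c * ((fun w : EuclideanSpace ℝ (Fin d) => ‖w‖ ^ 2 * rexp (-b * ‖w‖ ^ 2)) (v - u)) := by
      funext v; rw [hM' v]; ring
    rw [this]
    exact (((integrable_sq_exp_E hb)).comp_sub_right u).const_mul c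
  -- values of the Maxwellian moments
  have hIM : ∫ v : EuclideanSpace ℝ (Fin d), M v = ρ := by
    have : (fun v : EuclideanSpace ℝ (Fin d) => M v)
        = fun v => c * ((fun w : EuclideanSpace ℝ (Fin d) => rexp (-b * ‖w‖ ^ 2)) (v - u)) := by
      funext v; rw [hM' v]
    rw [this, integral_const_mul, integral_sub_right_eq_self
      (fun w : EuclideanSpace ℝ (Fin d) => rexp (-b * ‖w‖ ^ 2)) u, gaussE_val hb, hπb, hcρ]
  have hIM2 : ∫ v : EuclideanSpace ℝ (Fin d), M v * ‖v - u‖ ^ 2 = (d : ℝ) * ρ * T := by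
    have : (fun v : EuclideanSpace ℝ (Fin d) => M v * ‖v - u‖ ^ 2)
        = fun v => c * ((fun w : EuclideanSpace ℝ (Fin d) => ‖w‖ ^ 2 * rexp (-b * ‖w‖ ^ 2)) (v - u)) := by
      funext v; rw [hM' v]; ring
    rw [this, integral_const_mul, integral_sub_right_eq_self
      (fun w : EuclideanSpace ℝ (Fin d) => ‖w‖ ^ 2 * rexp (-b * ‖w‖ ^ 2)) u, gaussE_sq_val hd hb,
      hπb]
    have hbT : (d : ℝ) / (2 * b) = (d : ℝ) * T := by
      rw [hbdef]; field_simp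
    rw [hbT]
    linear_combination ((d:ℝ) * T) * hcρ
  -- second moment of f about u
  have hIfu_int : Integrable (fun v : EuclideanSpace ℝ (Fin d) => f v * inner ℝ u v) := by
    have : (fun v : EuclideanSpace ℝ (Fin d) => f v * inner ℝ u v)
        = fun v => (innerSL ℝ u) (f v • v) := by
      funext v
      simp [real_inner_smul_right]
    rw [this]
    exact (innerSL ℝ u).integrable_comp hf_mom1
  have hIfu : ∫ v : EuclideanSpace ℝ (Fin d), f v * inner ℝ u v = ρ * ‖u‖ ^ 2 := by
    have h1 : ∫ v : EuclideanSpace ℝ (Fin d), f v * inner ℝ u v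
        = ∫ v : EuclideanSpace ℝ (Fin d), inner ℝ u (f v • v) := by
      congr 1 with v
      rw [real_inner_smul_right]
    rw [h1, integral_inner hf_mom1 u, ← hu, real_inner_smul_right, real_inner_self_eq_norm_sq]
  have hIf2' : ∫ v : EuclideanSpace ℝ (Fin d), ‖v‖ ^ 2 * f v = ρ * ‖u‖ ^ 2 + (d : ℝ) * ρ * T := by
    linarith [hT]
  have hIf2_decomp : (fun v : EuclideanSpace ℝ (Fin d) => f v * ‖v - u‖ ^ 2)
      = fun v => ‖v‖ ^ 2 * f v - 2 * (f v * inner ℝ u v) + ‖u‖ ^ 2 * f v := by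
    funext v
    rw [norm_sub_sq_real, real_inner_comm]
    ring
  have ia1 : Integrable (fun v : EuclideanSpace ℝ (Fin d) =>
      ‖v‖ ^ 2 * f v - 2 * (f v * inner ℝ u v)) := hf_mom2.sub (hIfu_int.const_mul 2)
  have ia2 : Integrable (fun v : EuclideanSpace ℝ (Fin d) => ‖u‖ ^ 2 * f v) :=
    hf_int.const_mul (‖u‖ ^ 2)
  have ia3 : Integrable (fun v : EuclideanSpace ℝ (Fin d) => 2 * (f v * inner ℝ u v)) :=
    hIfu_int.const_mul 2
  have hIf2int : Integrable (fun v : EuclideanSpace ℝ (Fin d) => f v * ‖v - u‖ ^ 2) := by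
    rw [hIf2_decomp]
    exact ia1.add ia2
  have hIf2 : ∫ v : EuclideanSpace ℝ (Fin d), f v * ‖v - u‖ ^ 2 = (d : ℝ) * ρ * T := by
    rw [hIf2_decomp, integral_add ia1 ia2, integral_sub hf_mom2 ia3, integral_const_mul,
      integral_const_mul, hIf2', hIfu, ← hρ]
    ring
  -- ∫ (M - f) * log M = 0
  have hlogM : ∀ v, Real.log (M v) = Real.log c + (-b * ‖v - u‖ ^ 2) := by
    intro v
    rw [hM' v, Real.log_mul (ne_of_gt hc) (Real.exp_ne_zero _), Real.log_exp]
  have h0 : ∫ v : EuclideanSpace ℝ (Fin d), (M v - f v) * Real.log (M v) = 0 := by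
    have hdec : (fun v : EuclideanSpace ℝ (Fin d) => (M v - f v) * Real.log (M v))
        = fun v => Real.log c * (M v - f v)
            - b * (M v * ‖v - u‖ ^ 2 - f v * ‖v - u‖ ^ 2) := by
      funext v
      rw [hlogM v]
      ring
    have ib1 : Integrable (fun v : EuclideanSpace ℝ (Fin d) =>
        Real.log c * (M v - f v)) := (hMint.sub hf_int).const_mul _
    have ib2 : Integrable (fun v : EuclideanSpace ℝ (Fin d) =>
        b * (M v * ‖v - u‖ ^ 2 - f v * ‖v - u‖ ^ 2)) := (hMsqint.sub hIf2int).const_mul _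
    have ib3 : Integrable (fun v : EuclideanSpace ℝ (Fin d) => M v - f v) := hMint.sub hf_int
    have ib4 : Integrable (fun v : EuclideanSpace ℝ (Fin d) =>
        M v * ‖v - u‖ ^ 2 - f v * ‖v - u‖ ^ 2) := hMsqint.sub hIf2int
    rw [hdec, integral_sub ib1 ib2, integral_const_mul, integral_const_mul,
      integral_sub hMint hf_int, integral_sub hMsqint hIf2int, hIM, hIM2, hIf2, ← hρ]
    ring
  -- integrability of the entropy production pieces
  have int_flnf : Integrable (fun v => f v * Real.log (f v)) := by
    refine hint1.mono' ((hf_meas.mul (Real.measurable_log.comp hf_meas)).aestronglyMeasurable) ?_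
    filter_upwards with v
    rw [Real.norm_eq_abs, abs_mul, abs_of_pos (hf_pos v)]
  have int_Mlnf : Integrable (fun v => M v * Real.log (f v)) := by
    refine hint2.mono' ((hM_meas.mul (Real.measurable_log.comp hf_meas)).aestronglyMeasurable) ?_
    filter_upwards with v
    rw [Real.norm_eq_abs, abs_mul, abs_of_pos (hM_pos v)]
  have int_flnM : Integrable (fun v => f v * Real.log (M v)) := by
    refine hint3.mono' ((hf_meas.mul (Real.measurable_log.comp hM_meas)).aestronglyMeasurable) ?_
    filter_upwards with v
    rw [Real.norm_eq_abs, abs_mul, abs_of_pos (hf_pos v)]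
  have int_MlnM : Integrable (fun v => M v * Real.log (M v)) := by
    refine hint4.mono' ((hM_meas.mul (Real.measurable_log.comp hM_meas)).aestronglyMeasurable) ?_
    filter_upwards with v
    rw [Real.norm_eq_abs, abs_mul, abs_of_pos (hM_pos v)]
  have int1 : Integrable (fun v => (M v - f v) * Real.log (f v)) := by
    have : (fun v => (M v - f v) * Real.log (f v))
        = fun v => M v * Real.log (f v) - f v * Real.log (f v) := by
      funext v; ring
    rw [this]
    exact int_Mlnf.sub int_flnf
  have int2 : Integrable (fun v => (M v - f v) * Real.log (M v)) := by
    have : (fun v => (M v - f v) * Real.log (M v))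
        = fun v => M v * Real.log (M v) - f v * Real.log (M v) := by
      funext v; ring
    rw [this]
    exact int_MlnM.sub int_flnM
  have intg : Integrable (fun v => (M v - f v) * (Real.log (f v) - Real.log (M v))) := by
    have : (fun v => (M v - f v) * (Real.log (f v) - Real.log (M v)))
        = fun v => (M v - f v) * Real.log (f v) - (M v - f v) * Real.log (M v) := by
      funext v; ring
    rw [this]
    exact int1.sub int2
  -- pointwise nonpositivity
  have hg : ∀ v, (M v - f v) * (Real.log (f v) - Real.log (M v)) ≤ 0 := by
    intro v
    rcases le_total (f v) (M v) with h | h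
    · exact mul_nonpos_of_nonneg_of_nonpos (by linarith)
        (by linarith [Real.log_le_log (hf_pos v) h])
    · exact mul_nonpos_of_nonpos_of_nonneg (by linarith)
        (by linarith [Real.log_le_log (hM_pos v) h])
  -- conclusion
  have key : ∫ v : EuclideanSpace ℝ (Fin d), (M v - f v) * Real.log (f v) ≤ 0 := by
    have hsplit : (fun v : EuclideanSpace ℝ (Fin d) => (M v - f v) * Real.log (f v))
        = fun v => (M v - f v) * (Real.log (f v) - Real.log (M v))
            + (M v - f v) * Real.log (M v) := by
      funext v; ring
    rw [hsplit, integral_add intg int2, h0, add_zero]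
    exact integral_nonpos hg
  have hre : (fun v : EuclideanSpace ℝ (Fin d) => ((M v - f v) / Kn) * Real.log (f v))
      = fun v => (1 / Kn) * ((M v - f v) * Real.log (f v)) := by
    funext v; field_simp
  rw [hre, integral_const_mul]
  exact mul_nonpos_of_nonneg_of_nonpos (by positivity) key
end

section
/- Let d ≥ 1, Kn > 0, and let f : ℝ^d → ℝ be measurable and strictly positive, integrable with finite second moment, with density ρ > 0, bulk velocity u, and temperature T > 0 defined from its moments, and let M[f] be the associated Maxwellian. Assume that f·|ln f|, M[f]·|ln f|, f·|ln M[f]|, and M[f]·|ln M[f]| are all integrable. If ∫_{ℝ^d} Q_BGK(f)(v) ln f(v) dv = 0, where Q_BGK(f)(v) = (M[f](v) − f(v))/Kn, then f = M[f] almost everywhere; that is, equality in the H-theorem holds if and only if f reaches the Maxwellian equilibrium. -/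
open MeasureTheory Real

lemma gauss_integrable (d : ℕ) {b : ℝ} (hb : 0 < b) :
    Integrable (fun v : EuclideanSpace ℝ (Fin d) => Real.exp (-b * ‖v‖ ^ 2)) := by
  have h := GaussianFourier.integrable_cexp_neg_mul_sq_norm_add
    (V := EuclideanSpace ℝ (Fin d)) (b := (b : ℂ)) (by simpa using hb) 0 0
  have := h.norm
  refine this.congr (Filter.Eventually.of_forall fun v => ?_)
  simp [Complex.norm_exp]
  left; norm_cast

lemma gauss_integral (d : ℕ) {b : ℝ} (hb : 0 < b) :
    ∫ v : EuclideanSpace ℝ (Fin d), Real.exp (-b * ‖v‖ ^ 2) = (π / b) ^ ((d : ℝ) / 2) := by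
  have := GaussianFourier.integral_rexp_neg_mul_sq_norm (V := EuclideanSpace ℝ (Fin d)) hb
  rwa [finrank_euclideanSpace_fin] at this

lemma gauss_mom_integrable (d : ℕ) {b : ℝ} (hb : 0 < b) :
    Integrable (fun v : EuclideanSpace ℝ (Fin d) => ‖v‖ ^ 2 * Real.exp (-b * ‖v‖ ^ 2)) := by
  refine ((gauss_integrable d (by linarith : (0:ℝ) < b / 2)).const_mul (2 / b)).mono'
    (Continuous.aestronglyMeasurable (by continuity))
    (Filter.Eventually.of_forall fun v => ?_)
  have hx : (0:ℝ) ≤ ‖v‖ ^ 2 := by positivity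
  have h1 : ‖v‖ ^ 2 * Real.exp (-(b / 2) * ‖v‖ ^ 2) ≤ 2 / b := by
    rw [neg_mul, Real.exp_neg, ← div_eq_mul_inv, div_le_div_iff₀ (Real.exp_pos _) hb]
    nlinarith [Real.add_one_le_exp ((b / 2) * ‖v‖ ^ 2)]
  calc ‖(fun v : EuclideanSpace ℝ (Fin d) => ‖v‖ ^ 2 * Real.exp (-b * ‖v‖ ^ 2)) v‖
      = ‖v‖ ^ 2 * Real.exp (-(b/2) * ‖v‖ ^ 2) * Real.exp (-(b/2) * ‖v‖ ^ 2) := by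
        rw [Real.norm_of_nonneg (by positivity), mul_assoc, ← Real.exp_add]
        ring_nf
    _ ≤ 2 / b * Real.exp (-(b/2) * ‖v‖ ^ 2) := by
        have := Real.exp_pos (-(b/2) * ‖v‖ ^ 2)
        nlinarith

lemma gauss_mom_integral (d : ℕ) {b : ℝ} (hb : 0 < b) :
    ∫ v : EuclideanSpace ℝ (Fin d), ‖v‖ ^ 2 * Real.exp (-b * ‖v‖ ^ 2)
      = ((d : ℝ) / (2 * b)) * (π / b) ^ ((d : ℝ) / 2) := by
  set s : ℝ := (d : ℝ) / 2 with hs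
  have hball : ∀ t ∈ Metric.ball b (b / 2), 0 < t ∧ b / 2 ≤ t := by
    intro t ht
    rw [Metric.mem_ball, Real.dist_eq, abs_lt] at ht
    constructor <;> linarith [ht.1, ht.2]
  have key := hasDerivAt_integral_of_dominated_loc_of_deriv_le (μ := (volume : Measure (EuclideanSpace ℝ (Fin d))))
      (F := fun t (v : EuclideanSpace ℝ (Fin d)) => Real.exp (-t * ‖v‖ ^ 2))
      (F' := fun t (v : EuclideanSpace ℝ (Fin d)) => -(‖v‖ ^ 2) * Real.exp (-t * ‖v‖ ^ 2))
      (x₀ := b) (bound := fun v => ‖v‖ ^ 2 * Real.exp (-(b / 2) * ‖v‖ ^ 2))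
      (Metric.ball_mem_nhds b (half_pos hb))
      (Filter.Eventually.of_forall fun t =>
        (Continuous.aestronglyMeasurable (by continuity)))
      (gauss_integrable d hb)
      (Continuous.aestronglyMeasurable (by continuity))
      (Filter.Eventually.of_forall fun v => ?_)
      ((gauss_mom_integrable d (half_pos hb)))
      (Filter.Eventually.of_forall fun v => ?_)
  · -- use key.2 together with the closed form
    have hclosed : HasDerivAt (fun t : ℝ => π ^ s * t ^ (-s)) (π ^ s * (-s * b ^ (-s - 1))) b := by
      exact (Real.hasDerivAt_rpow_const (Or.inl hb.ne')).const_mul _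
    have heq : (fun t : ℝ => ∫ v : EuclideanSpace ℝ (Fin d), Real.exp (-t * ‖v‖ ^ 2))
        =ᶠ[nhds b] fun t : ℝ => π ^ s * t ^ (-s) := by
      filter_upwards [eventually_gt_nhds hb] with t ht
      rw [gauss_integral d ht, Real.div_rpow pi_nonneg ht.le, Real.rpow_neg ht.le,
        div_eq_mul_inv]
    have h2 : HasDerivAt (fun t : ℝ => ∫ v : EuclideanSpace ℝ (Fin d), Real.exp (-t * ‖v‖ ^ 2))
        (π ^ s * (-s * b ^ (-s - 1))) b := hclosed.congr_of_eventuallyEq heq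
    have huniq : (∫ v : EuclideanSpace ℝ (Fin d), -(‖v‖ ^ 2) * Real.exp (-b * ‖v‖ ^ 2))
        = π ^ s * (-s * b ^ (-s - 1)) := (h2.unique key.2).symm
    have hneg : (∫ v : EuclideanSpace ℝ (Fin d), -(‖v‖ ^ 2) * Real.exp (-b * ‖v‖ ^ 2))
        = -∫ v : EuclideanSpace ℝ (Fin d), ‖v‖ ^ 2 * Real.exp (-b * ‖v‖ ^ 2) := by
      rw [← integral_neg]
      congr 1 with v
      ring
    have hres : (∫ v : EuclideanSpace ℝ (Fin d), ‖v‖ ^ 2 * Real.exp (-b * ‖v‖ ^ 2))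
        = s * π ^ s * b ^ (-s - 1) := by
      rw [hneg] at huniq
      linarith [huniq]
    rw [hres, Real.div_rpow pi_nonneg hb.le]
    have hsplit : b ^ (-s - 1) = (b ^ s)⁻¹ * b⁻¹ := by
      rw [show -s - 1 = -s + (-1) by ring, Real.rpow_add hb, Real.rpow_neg hb.le,
        Real.rpow_neg_one]
    rw [hsplit]
    have hbs : (0:ℝ) < b ^ s := Real.rpow_pos_of_pos hb s
    have hds : (d:ℝ) = 2 * s := by rw [hs]; ring
    rw [hds]
    field_simp
  · intro t ht
    obtain ⟨ht0, htge⟩ := hball t ht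
    have : ‖-(‖v‖ ^ 2) * Real.exp (-t * ‖v‖ ^ 2)‖ = ‖v‖ ^ 2 * Real.exp (-t * ‖v‖ ^ 2) := by
      rw [norm_mul, norm_neg, Real.norm_of_nonneg (by positivity),
        Real.norm_of_nonneg (Real.exp_pos _).le]
    rw [this]
    exact mul_le_mul_of_nonneg_left
      (Real.exp_le_exp.mpr (by nlinarith [sq_nonneg ‖v‖])) (by positivity)
  · intro t ht
    have h0 : HasDerivAt (fun x : ℝ => -x * ‖v‖ ^ 2) (-(‖v‖ ^ 2)) t := by
      simpa using ((hasDerivAt_id t).neg.mul_const (‖v‖ ^ 2))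
    have := h0.exp
    exact this.congr_deriv (by ring)

set_option maxHeartbeats 1000000 in
/-- Equality in the BGK H-theorem holds only at equilibrium: if
`∫ Q_BGK(f) ln f dv = 0` with `Q_BGK(f) = (M[f] − f)/Kn`, then `f = M[f]` a.e. -/
theorem bgk_H_theorem_equality
    (d : ℕ) (hd : 1 ≤ d) (Kn : ℝ) (hKn : 0 < Kn)
    (f : EuclideanSpace ℝ (Fin d) → ℝ)
    (hf_meas : Measurable f)
    (hf_pos : ∀ v, 0 < f v)
    (hf_int : Integrable f)
    (hf_mom1 : Integrable (fun v : EuclideanSpace ℝ (Fin d) => f v • v))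
    (hf_mom2 : Integrable (fun v : EuclideanSpace ℝ (Fin d) => ‖v‖ ^ 2 * f v))
    (ρ : ℝ) (u : EuclideanSpace ℝ (Fin d)) (T : ℝ)
    (hρ : ρ = ∫ v : EuclideanSpace ℝ (Fin d), f v)
    (hρ_pos : 0 < ρ)
    (hu : ρ • u = ∫ v : EuclideanSpace ℝ (Fin d), f v • v)
    (hT : (1 / 2) * ρ * ‖u‖ ^ 2 + ((d : ℝ) / 2) * ρ * T
      = (1 / 2) * ∫ v : EuclideanSpace ℝ (Fin d), ‖v‖ ^ 2 * f v)
    (hT_pos : 0 < T)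
    (M : EuclideanSpace ℝ (Fin d) → ℝ)
    (hM : ∀ v, M v = ρ * (2 * π * T) ^ (-(d : ℝ) / 2) * Real.exp (-‖v - u‖ ^ 2 / (2 * T)))
    (hint1 : Integrable (fun v => f v * |Real.log (f v)|))
    (hint2 : Integrable (fun v => M v * |Real.log (f v)|))
    (hint3 : Integrable (fun v => f v * |Real.log (M v)|))
    (hint4 : Integrable (fun v => M v * |Real.log (M v)|))
    (hzero : ∫ v : EuclideanSpace ℝ (Fin d), ((M v - f v) / Kn) * Real.log (f v) = 0) :
    f =ᵐ[volume] M := by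
  set b : ℝ := 1 / (2 * T) with hbdef
  have hb : 0 < b := by positivity
  set C : ℝ := ρ * (2 * π * T) ^ (-(d : ℝ) / 2) with hCdef
  have h2πT : (0:ℝ) < 2 * π * T := by positivity
  have hC : 0 < C := by
    have := Real.rpow_pos_of_pos h2πT (-(d : ℝ) / 2)
    positivity
  have hM' : ∀ v : EuclideanSpace ℝ (Fin d), M v = C * Real.exp (-b * ‖v - u‖ ^ 2) := by
    intro v
    rw [hM v]
    congr 1
    rw [hbdef]
    field_simp
  have hM_pos : ∀ v, 0 < M v := fun v => by
    rw [hM' v]; positivity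
  have hM_cont : Continuous M := by
    have h0 : Continuous (fun v : EuclideanSpace ℝ (Fin d) => ‖v - u‖ ^ 2) :=
      (continuous_id.sub continuous_const).norm.pow 2
    have h1 : Continuous (fun v : EuclideanSpace ℝ (Fin d) => -b * ‖v - u‖ ^ 2) :=
      continuous_const.mul h0
    have h2 : Continuous (fun v : EuclideanSpace ℝ (Fin d) => C * Real.exp (-b * ‖v - u‖ ^ 2)) :=
      continuous_const.mul (Real.continuous_exp.comp h1)
    exact h2.congr (fun v => (hM' v).symm)
  -- integral of the Maxwellian
  have hπb : π / b = 2 * π * T := by rw [hbdef]; field_simp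
  have hCnorm : C * (π / b) ^ ((d:ℝ)/2) = ρ := by
    rw [hπb, hCdef, mul_assoc, ← Real.rpow_add h2πT]
    norm_num [neg_div]
  have hM_int : Integrable M := by
    have : Integrable (fun v : EuclideanSpace ℝ (Fin d) => C * Real.exp (-b * ‖v - u‖ ^ 2)) :=
      ((gauss_integrable d hb).comp_sub_right u).const_mul C
    exact this.congr (Filter.Eventually.of_forall fun v => (hM' v).symm)
  have hM_mass : ∫ v : EuclideanSpace ℝ (Fin d), M v = ρ := by
    have h1 : ∫ v : EuclideanSpace ℝ (Fin d), M v = ∫ v : EuclideanSpace ℝ (Fin d), C * Real.exp (-b * ‖v - u‖ ^ 2) :=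
      integral_congr_ae (Filter.Eventually.of_forall fun v => hM' v)
    rw [h1, integral_const_mul,
      integral_sub_right_eq_self (μ := volume) (fun w : EuclideanSpace ℝ (Fin d) => Real.exp (-b * ‖w‖ ^ 2)) u,
      gauss_integral d hb, hCnorm]
  have hM2_int : Integrable (fun v : EuclideanSpace ℝ (Fin d) => ‖v - u‖ ^ 2 * M v) := by
    have : Integrable (fun v : EuclideanSpace ℝ (Fin d) => C * (‖v - u‖ ^ 2 * Real.exp (-b * ‖v - u‖ ^ 2))) :=
      (((gauss_mom_integrable d hb).comp_sub_right u)).const_mul C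
    exact this.congr (Filter.Eventually.of_forall fun v => by simp only [hM']; ring)
  have hM_mom2 : ∫ v : EuclideanSpace ℝ (Fin d), ‖v - u‖ ^ 2 * M v = (d : ℝ) * ρ * T := by
    have h1 : ∫ v : EuclideanSpace ℝ (Fin d), ‖v - u‖ ^ 2 * M v
        = ∫ v : EuclideanSpace ℝ (Fin d), C * (‖v - u‖ ^ 2 * Real.exp (-b * ‖v - u‖ ^ 2)) :=
      integral_congr_ae (Filter.Eventually.of_forall fun v => by simp only [hM']; ring)
    rw [h1, integral_const_mul,
      integral_sub_right_eq_self (μ := volume)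
        (fun w : EuclideanSpace ℝ (Fin d) => ‖w‖ ^ 2 * Real.exp (-b * ‖w‖ ^ 2)) u,
      gauss_mom_integral d hb]
    have hdb : (d : ℝ) / (2 * b) = (d : ℝ) * T := by rw [hbdef]; field_simp
    calc C * ((d : ℝ) / (2 * b) * (π / b) ^ ((d:ℝ)/2))
        = ((d : ℝ) / (2 * b)) * (C * (π / b) ^ ((d:ℝ)/2)) := by ring
      _ = (d : ℝ) * ρ * T := by rw [hCnorm, hdb]; ring
  -- second moment of f about u
  have hinner_int : Integrable (fun v : EuclideanSpace ℝ (Fin d) => (inner ℝ u (f v • v) : ℝ)) :=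
    (innerSL ℝ u).integrable_comp hf_mom1
  have hinner_val : ∫ v : EuclideanSpace ℝ (Fin d), (inner ℝ u (f v • v) : ℝ) = ρ * ‖u‖ ^ 2 := by
    have h := ContinuousLinearMap.integral_comp_comm (innerSL ℝ u) hf_mom1
    simp only [innerSL_apply_apply] at h
    rw [h, ← hu, real_inner_smul_right, real_inner_self_eq_norm_sq]
  have hexp : ∀ v : EuclideanSpace ℝ (Fin d), ‖v - u‖ ^ 2 * f v
      = ‖v‖ ^ 2 * f v - 2 * (inner ℝ u (f v • v) : ℝ) + ‖u‖ ^ 2 * f v := by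
    intro v
    have h1 : ‖v - u‖ ^ 2 = ‖v‖ ^ 2 - 2 * (inner ℝ v u : ℝ) + ‖u‖ ^ 2 := norm_sub_sq_real v u
    have h2 : (inner ℝ u (f v • v) : ℝ) = f v * (inner ℝ v u : ℝ) := by
      rw [real_inner_smul_right, real_inner_comm]
    rw [h1, h2]; ring
  have hf2_int : Integrable (fun v : EuclideanSpace ℝ (Fin d) => ‖v - u‖ ^ 2 * f v) := by
    have : Integrable (fun v : EuclideanSpace ℝ (Fin d) =>
        ‖v‖ ^ 2 * f v - 2 * (inner ℝ u (f v • v) : ℝ) + ‖u‖ ^ 2 * f v) :=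
      ((hf_mom2.sub (hinner_int.const_mul 2)).add (hf_int.const_mul (‖u‖ ^ 2)))
    exact this.congr (Filter.Eventually.of_forall fun v => (hexp v).symm)
  have hf_mom2_val : ∫ v : EuclideanSpace ℝ (Fin d), ‖v‖ ^ 2 * f v = ρ * ‖u‖ ^ 2 + (d : ℝ) * ρ * T := by
    linarith [hT]
  have hf_mom2u : ∫ v : EuclideanSpace ℝ (Fin d), ‖v - u‖ ^ 2 * f v = (d : ℝ) * ρ * T := by
    have h1 : ∫ v : EuclideanSpace ℝ (Fin d), ‖v - u‖ ^ 2 * f v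
        = ∫ v : EuclideanSpace ℝ (Fin d), (‖v‖ ^ 2 * f v - 2 * (inner ℝ u (f v • v) : ℝ) + ‖u‖ ^ 2 * f v) :=
      integral_congr_ae (Filter.Eventually.of_forall fun v => hexp v)
    have hA : Integrable (fun v : EuclideanSpace ℝ (Fin d) =>
        ‖v‖ ^ 2 * f v - 2 * (inner ℝ u (f v • v) : ℝ)) := hf_mom2.sub (hinner_int.const_mul 2)
    have hB : Integrable (fun v : EuclideanSpace ℝ (Fin d) => ‖u‖ ^ 2 * f v) :=
      hf_int.const_mul (‖u‖ ^ 2)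
    have hC2 : Integrable (fun v : EuclideanSpace ℝ (Fin d) =>
        2 * (inner ℝ u (f v • v) : ℝ)) := hinner_int.const_mul 2
    rw [h1, integral_add hA hB, integral_sub hf_mom2 hC2, integral_const_mul, integral_const_mul,
      hinner_val, hf_mom2_val, ← hρ]
    ring
  -- logarithm of the Maxwellian
  have hlogM : ∀ v : EuclideanSpace ℝ (Fin d), Real.log (M v) = Real.log C - b * ‖v - u‖ ^ 2 := by
    intro v
    rw [hM' v, Real.log_mul hC.ne' (Real.exp_pos _).ne', Real.log_exp]
    ring
  -- integrability of products with logarithms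
  have hM_meas : Measurable M := hM_cont.measurable
  have hlogf_meas : Measurable (fun v : EuclideanSpace ℝ (Fin d) => Real.log (f v)) := Real.measurable_log.comp hf_meas
  have hlogM_meas : Measurable (fun v : EuclideanSpace ℝ (Fin d) => Real.log (M v)) := Real.measurable_log.comp hM_meas
  have habs : ∀ (g h : EuclideanSpace ℝ (Fin d) → ℝ), (∀ v, 0 < g v) → Measurable g → Measurable h →
      Integrable (fun v => g v * |Real.log (h v)|) →
      Integrable (fun v => g v * Real.log (h v)) := by
    intro g h hg hmg hmh hi
    refine hi.mono' ((hmg.mul (Real.measurable_log.comp hmh)).aestronglyMeasurable)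
      (Filter.Eventually.of_forall fun v => ?_)
    rw [Real.norm_eq_abs, abs_mul, abs_of_pos (hg v)]
  have hflf : Integrable (fun v : EuclideanSpace ℝ (Fin d) => f v * Real.log (f v)) :=
    habs f f hf_pos hf_meas hf_meas hint1
  have hMlf : Integrable (fun v : EuclideanSpace ℝ (Fin d) => M v * Real.log (f v)) :=
    habs M f hM_pos hM_meas hf_meas hint2
  have hflM : Integrable (fun v : EuclideanSpace ℝ (Fin d) => f v * Real.log (M v)) :=
    habs f M hf_pos hf_meas hM_meas hint3
  have hMlM : Integrable (fun v : EuclideanSpace ℝ (Fin d) => M v * Real.log (M v)) :=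
    habs M M hM_pos hM_meas hM_meas hint4
  have hI1_int : Integrable (fun v : EuclideanSpace ℝ (Fin d) => (M v - f v) * Real.log (f v)) := by
    have hs : Integrable (fun v : EuclideanSpace ℝ (Fin d) =>
        M v * Real.log (f v) - f v * Real.log (f v)) := hMlf.sub hflf
    exact hs.congr (Filter.Eventually.of_forall fun v => by ring)
  have hI2_int : Integrable (fun v : EuclideanSpace ℝ (Fin d) => (M v - f v) * Real.log (M v)) := by
    have hs : Integrable (fun v : EuclideanSpace ℝ (Fin d) =>
        M v * Real.log (M v) - f v * Real.log (M v)) := hMlM.sub hflM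
    exact hs.congr (Filter.Eventually.of_forall fun v => by ring)
  -- the first integral vanishes by hypothesis
  have hI1 : ∫ v : EuclideanSpace ℝ (Fin d), (M v - f v) * Real.log (f v) = 0 := by
    have h1 : ∫ v : EuclideanSpace ℝ (Fin d), ((M v - f v) / Kn) * Real.log (f v)
        = Kn⁻¹ * ∫ v : EuclideanSpace ℝ (Fin d), (M v - f v) * Real.log (f v) := by
      rw [← integral_const_mul]
      exact integral_congr_ae (Filter.Eventually.of_forall fun v => by
        field_simp)
    rw [h1] at hzero
    rcases mul_eq_zero.mp hzero with h | h
    · exact absurd h (inv_ne_zero hKn.ne')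
    · exact h
  -- the second integral vanishes by moment matching
  have hI2 : ∫ v : EuclideanSpace ℝ (Fin d), (M v - f v) * Real.log (M v) = 0 := by
    have h1 : ∫ v : EuclideanSpace ℝ (Fin d), (M v - f v) * Real.log (M v)
        = ∫ v : EuclideanSpace ℝ (Fin d), (Real.log C * M v - Real.log C * f v
            - b * (‖v - u‖ ^ 2 * M v) + b * (‖v - u‖ ^ 2 * f v)) :=
      integral_congr_ae (Filter.Eventually.of_forall fun v => by simp only [hlogM]; ring)
    have hA1 : Integrable (fun v : EuclideanSpace ℝ (Fin d) => Real.log C * M v) :=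
      hM_int.const_mul _
    have hA2 : Integrable (fun v : EuclideanSpace ℝ (Fin d) => Real.log C * f v) :=
      hf_int.const_mul _
    have hA3 : Integrable (fun v : EuclideanSpace ℝ (Fin d) => b * (‖v - u‖ ^ 2 * M v)) :=
      hM2_int.const_mul b
    have hA4 : Integrable (fun v : EuclideanSpace ℝ (Fin d) => b * (‖v - u‖ ^ 2 * f v)) :=
      hf2_int.const_mul b
    have hA12 : Integrable (fun v : EuclideanSpace ℝ (Fin d) =>
        Real.log C * M v - Real.log C * f v) := hA1.sub hA2
    have hA123 : Integrable (fun v : EuclideanSpace ℝ (Fin d) =>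
        Real.log C * M v - Real.log C * f v - b * (‖v - u‖ ^ 2 * M v)) := hA12.sub hA3
    rw [h1, integral_add hA123 hA4, integral_sub hA12 hA3, integral_sub hA1 hA2,
      integral_const_mul, integral_const_mul, integral_const_mul, integral_const_mul,
      hM_mass, hM_mom2, hf_mom2u, ← hρ]
    ring
  -- the entropy production integrand
  set h : EuclideanSpace ℝ (Fin d) → ℝ := fun v => (M v - f v) * (Real.log (M v) - Real.log (f v)) with hhdef
  have h_int : Integrable h := by
    have hs : Integrable (fun v : EuclideanSpace ℝ (Fin d) =>
        (M v - f v) * Real.log (M v) - (M v - f v) * Real.log (f v)) := hI2_int.sub hI1_int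
    exact hs.congr (Filter.Eventually.of_forall fun v => by simp only [hhdef]; ring)
  have h_nonneg : ∀ v, 0 ≤ h v := by
    intro v
    show 0 ≤ (M v - f v) * (Real.log (M v) - Real.log (f v))
    rcases le_total (f v) (M v) with hle | hle
    · exact mul_nonneg (by linarith)
        (sub_nonneg.mpr (Real.log_le_log (hf_pos v) hle))
    · have h1 : M v - f v ≤ 0 := by linarith
      have h2 : Real.log (M v) - Real.log (f v) ≤ 0 :=
        sub_nonpos.mpr (Real.log_le_log (hM_pos v) hle)
      nlinarith
  have h_zero : ∫ v : EuclideanSpace ℝ (Fin d), h v = 0 := by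
    have h1 : ∫ v : EuclideanSpace ℝ (Fin d), h v
        = (∫ v : EuclideanSpace ℝ (Fin d), (M v - f v) * Real.log (M v))
          - ∫ v : EuclideanSpace ℝ (Fin d), (M v - f v) * Real.log (f v) := by
      rw [← integral_sub hI2_int hI1_int]
      exact integral_congr_ae (Filter.Eventually.of_forall fun v => by
        simp only [hhdef]; ring)
    rw [h1, hI1, hI2]; ring
  have h_ae : h =ᵐ[volume] 0 :=
    (integral_eq_zero_iff_of_nonneg h_nonneg h_int).mp h_zero
  filter_upwards [h_ae] with v hv
  simp only [hhdef, Pi.zero_apply] at hv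
  rcases mul_eq_zero.mp hv with h0 | h0
  · linarith [sub_eq_zero.mp h0]
  · have hlog : Real.log (M v) = Real.log (f v) := sub_eq_zero.mp h0
    calc f v = Real.exp (Real.log (f v)) := (Real.exp_log (hf_pos v)).symm
      _ = Real.exp (Real.log (M v)) := by rw [hlog]
      _ = M v := Real.exp_log (hM_pos v)
end

section
/- Let d ≥ 2, L > 0, R > 0, N an even positive integer, let Φ : [0,R] → ℝ be continuous, and let b : [−1,1] → ℝ be bounded and measurable. Given complex coefficients (c_k) indexed by multi-indices k ∈ ℤ^d with ‖k‖_∞ ≤ N/2, define the trigonometric polynomial f_N(v) = Σ_{‖k‖_∞ ≤ N/2} c_k e^{i(π/L) k·v}, and define the truncated collision operator Q^R(f_N,f_N)(v) = ∫_{B_R} ∫_{𝕊^{d-1}} Φ(|q|) b(σ·q/|q|) [f_N(v_*') f_N(v') − f_N(v−q) f_N(v)] dσ dq, where v' = v − (q − |q|σ)/2 and v_*' = v − (q + |q|σ)/2. Then for every multi-index k with ‖k‖_∞ ≤ N/2, the k-th Fourier coefficient (1/(2L)^d) ∫_{[−L,L]^d} Q^R(f_N,f_N)(v) e^{−i(π/L)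 k·v} dv equals Σ_{l+m=k, ‖l‖_∞ ≤ N/2, ‖m‖_∞ ≤ N/2} G(l,m) c_l c_m, where G(l,m) = ∫_{B_R} ∫_{𝕊^{d-1}} Φ(|q|) b(σ·q/|q|) [ e^{−i(π/(2L))(l+m)·q + i(π/(2L))|q|(l−m)·σ} − e^{−i(π/L) m·q} ] dσ dq. -/
open MeasureTheory Real
open scoped RealInnerProductSpace BigOperators

/-- The set of Fourier multi-indices `k ∈ ℤ^d` with `‖k‖_∞ ≤ N/2`. -/
noncomputable def spectralModes (d N : ℕ) : Finset (Fin d → ℤ) :=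
  Finset.Icc (fun _ => -((N : ℤ) / 2)) (fun _ => ((N : ℤ) / 2))

/-- The pairing `k · v = ∑ j k_j v_j` between a multi-index `k ∈ ℤ^d` and `v ∈ ℝ^d`. -/
def multiDot {d : ℕ} (k : Fin d → ℤ) (v : EuclideanSpace ℝ (Fin d)) : ℝ :=
  ∑ j, (k j : ℝ) * v j

section Aux

variable {d : ℕ}

lemma multiDot_add_left (l m : Fin d → ℤ) (v : EuclideanSpace ℝ (Fin d)) :
    multiDot (l + m) v = multiDot l v + multiDot m v := by
  simp only [multiDot, ← Finset.sum_add_distrib]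
  refine Finset.sum_congr rfl fun j _ => ?_
  have : (l + m) j = l j + m j := rfl
  rw [this]; push_cast; ring

lemma multiDot_sub_left (l m : Fin d → ℤ) (v : EuclideanSpace ℝ (Fin d)) :
    multiDot (l - m) v = multiDot l v - multiDot m v := by
  simp only [multiDot, ← Finset.sum_sub_distrib]
  refine Finset.sum_congr rfl fun j _ => ?_
  have : (l - m) j = l j - m j := rfl
  rw [this]; push_cast; ring

lemma multiDot_sub_right (k : Fin d → ℤ) (v w : EuclideanSpace ℝ (Fin d)) :
    multiDot k (v - w) = multiDot k v - multiDot k w := by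
  simp only [multiDot, ← Finset.sum_sub_distrib]
  refine Finset.sum_congr rfl fun j _ => ?_
  have : (v - w) j = v j - w j := rfl
  rw [this]; ring

lemma multiDot_add_right (k : Fin d → ℤ) (v w : EuclideanSpace ℝ (Fin d)) :
    multiDot k (v + w) = multiDot k v + multiDot k w := by
  simp only [multiDot, ← Finset.sum_add_distrib]
  refine Finset.sum_congr rfl fun j _ => ?_
  have : (v + w) j = v j + w j := rfl
  rw [this]; ring

lemma multiDot_smul_right (k : Fin d → ℤ) (r : ℝ) (w : EuclideanSpace ℝ (Fin d)) :
    multiDot k (r • w) = r * multiDot k w := by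
  simp only [multiDot, Finset.mul_sum]
  refine Finset.sum_congr rfl fun j _ => ?_
  have : (r • w) j = r * w j := rfl
  rw [this]; ring

lemma continuous_multiDot (k : Fin d → ℤ) :
    Continuous fun v : EuclideanSpace ℝ (Fin d) => multiDot k v := by
  unfold multiDot
  refine continuous_finset_sum _ fun j _ => ?_
  exact continuous_const.mul (EuclideanSpace.proj j).continuous

lemma norm_exp_I_re_zero (z : ℂ) (h : z.re = 0) : ‖Complex.exp z‖ = 1 := by
  rw [Complex.norm_exp, h, Real.exp_zero]

lemma line_integral (L : ℝ) (hL : 0 < L) (n : ℤ) :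
    ∫ x in Set.Icc (-L) L, Complex.exp (Complex.I * (((π / L) * (n * x) : ℝ) : ℂ))
      = if n = 0 then ((2 * L : ℝ) : ℂ) else 0 := by
  by_cases hn : n = 0
  · simp only [hn, Int.cast_zero, zero_mul, mul_zero, Complex.ofReal_zero, Complex.exp_zero,
      if_pos]
    rw [setIntegral_const]
    rw [Real.volume_real_Icc]
    rw [max_eq_left (by linarith)]
    rw [Complex.real_smul]
    push_cast
    ring
  · rw [if_neg hn]
    have hle : (-L) ≤ L := by linarith
    have key : ∀ x : ℝ, Complex.exp (Complex.I * (((π / L) * (n * x) : ℝ) : ℂ))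
        = Complex.exp ((Complex.I * (π / L) * n) * (x : ℂ)) := by
      intro x; congr 1; push_cast; ring
    simp_rw [key]
    rw [MeasureTheory.integral_Icc_eq_integral_Ioc,
      ← intervalIntegral.integral_of_le hle]
    have hc : (Complex.I * (π / L) * n) ≠ 0 := by
      simp only [ne_eq, mul_eq_zero, Complex.I_ne_zero, false_or, Complex.ofReal_eq_zero,
        div_eq_zero_iff, Int.cast_eq_zero]
      push_neg
      exact ⟨⟨Real.pi_ne_zero, hL.ne'⟩, hn⟩
    rw [integral_exp_mul_complex hc]
    have hL0 : (L : ℂ) ≠ 0 := by exact_mod_cast hL.ne'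
    have e1 : Complex.I * (↑π / ↑L) * ↑n * ↑L = ↑n * (↑π * Complex.I) := by
      field_simp
    have e2 : Complex.I * (↑π / ↑L) * ↑n * ↑(-L) = (-n : ℤ) * (↑π * Complex.I) := by
      push_cast
      rw [mul_neg, e1]
      ring
    rw [e1, e2, Complex.exp_int_mul, Complex.exp_int_mul, Complex.exp_pi_mul_I]
    rw [zpow_neg]
    have : ((-1 : ℂ) ^ n)⁻¹ = (-1 : ℂ) ^ n := by
      rcases Int.even_or_odd n with h | h
      · rw [h.neg_one_zpow]; norm_num
      · rw [Odd.neg_one_zpow h]; norm_num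
    rw [this, sub_self, zero_div]

lemma cube_integral (d : ℕ) (L : ℝ) (hL : 0 < L) (n : Fin d → ℤ) :
    ∫ v in {v : EuclideanSpace ℝ (Fin d) | ∀ j, |v j| ≤ L},
      Complex.exp (Complex.I * (((π / L) * multiDot n v : ℝ) : ℂ))
      = if n = 0 then (((2 * L) ^ d : ℝ) : ℂ) else 0 := by
  have h₁ : MeasurePreserving ((MeasurableEquiv.toLp 2 (Fin d → ℝ))) :=
    (EuclideanSpace.volume_preserving_symm_measurableEquiv_toLp (Fin d)).symm
  have h₂ : MeasurableEmbedding ((MeasurableEquiv.toLp 2 (Fin d → ℝ))) :=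
    (MeasurableEquiv.toLp 2 (Fin d → ℝ)).measurableEmbedding
  have himg : ((MeasurableEquiv.toLp 2 (Fin d → ℝ))) ''
      (Set.univ.pi fun _ : Fin d => Set.Icc (-L) L)
      = {v : EuclideanSpace ℝ (Fin d) | ∀ j, |v j| ≤ L} := by
    ext v
    simp only [Set.mem_image, Set.mem_pi, Set.mem_univ, forall_true_left, Set.mem_setOf_eq,
      Set.mem_Icc, true_implies]
    constructor
    · rintro ⟨x, hx, rfl⟩
      intro j
      have : ((MeasurableEquiv.toLp 2 (Fin d → ℝ)) x) j = x j := rfl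
      rw [this, abs_le]
      exact hx j
    · intro hv
      refine ⟨(MeasurableEquiv.toLp 2 (Fin d → ℝ)).symm v, fun j => ?_, by simp⟩
      have : ((MeasurableEquiv.toLp 2 (Fin d → ℝ)).symm v) j = v j := rfl
      rw [this, ← abs_le]
      exact hv j
  rw [← himg, MeasurePreserving.setIntegral_image_emb h₁ h₂]
  have hmeas : MeasurableSet (Set.univ.pi fun _ : Fin d => Set.Icc (-L) L) :=
    MeasurableSet.univ_pi fun _ => measurableSet_Icc
  have hexp : ∀ x : Fin d → ℝ,
      Complex.exp (Complex.I *
        (((π / L) * multiDot n ((MeasurableEquiv.toLp 2 (Fin d → ℝ)) x) : ℝ) : ℂ))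
      = ∏ j, Complex.exp (Complex.I * (((π / L) * (n j * x j) : ℝ) : ℂ)) := by
    intro x
    have h1 : multiDot n ((MeasurableEquiv.toLp 2 (Fin d → ℝ)) x)
        = ∑ j, (n j : ℝ) * x j := rfl
    rw [h1, Finset.mul_sum, ← Complex.exp_sum]
    congr 1
    push_cast
    rw [Finset.mul_sum]
  have hind : (Set.indicator (Set.univ.pi fun _ : Fin d => Set.Icc (-L) L)
      (fun x : Fin d → ℝ => Complex.exp (Complex.I *
        (((π / L) * multiDot n ((MeasurableEquiv.toLp 2 (Fin d → ℝ)) x) : ℝ) : ℂ))))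
      = fun x : Fin d → ℝ => ∏ j, (Set.Icc (-L) L).indicator
          (fun t : ℝ => Complex.exp (Complex.I * (((π / L) * (n j * t) : ℝ) : ℂ))) (x j) := by
    funext x
    by_cases hx : x ∈ (Set.univ.pi fun _ : Fin d => Set.Icc (-L) L)
    · rw [Set.indicator_of_mem hx, hexp]
      refine Finset.prod_congr rfl fun j _ => ?_
      rw [Set.indicator_of_mem (hx j (Set.mem_univ j))]
    · rw [Set.indicator_of_notMem hx]
      obtain ⟨j, hj⟩ : ∃ j, x j ∉ Set.Icc (-L) L := by
        by_contra h
        push_neg at h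
        exact hx fun j _ => h j
      exact (Finset.prod_eq_zero (Finset.mem_univ j)
        (Set.indicator_of_notMem hj _)).symm
  rw [← integral_indicator hmeas, hind]
  beta_reduce
  rw [MeasureTheory.volume_pi,
    MeasureTheory.integral_fintype_prod_eq_prod (ι := Fin d)
      (fun j => (Set.Icc (-L) L).indicator
        (fun t : ℝ => Complex.exp (Complex.I * (((π / L) * (n j * t) : ℝ) : ℂ))))]
  have hfac : ∀ j, (∫ t : ℝ, (Set.Icc (-L) L).indicator
      (fun t : ℝ => Complex.exp (Complex.I * (((π / L) * (n j * t) : ℝ) : ℂ))) t)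
      = if n j = 0 then ((2 * L : ℝ) : ℂ) else 0 := by
    intro j
    rw [integral_indicator measurableSet_Icc]
    exact line_integral L hL (n j)
  simp_rw [hfac]
  by_cases hn : n = 0
  · subst hn
    simp [Finset.prod_const, Complex.ofReal_pow]
  · rw [if_neg hn]
    obtain ⟨j, hj⟩ : ∃ j, n j ≠ 0 := by
      by_contra h
      push_neg at h
      exact hn (funext h)
    exact Finset.prod_eq_zero (Finset.mem_univ j) (if_neg hj)

lemma expand_point (L : ℝ) (hL : 0 < L) (S : Finset (Fin d → ℤ))
    (c : (Fin d → ℤ) → ℂ) (A : ℂ) (k : Fin d → ℤ)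
    (v q σ : EuclideanSpace ℝ (Fin d)) :
    A * ((∑ m ∈ S, c m * Complex.exp (Complex.I *
            Complex.ofReal ((π / L) * multiDot m (v - (2:ℝ)⁻¹ • (q + ‖q‖ • σ))))) *
         (∑ l ∈ S, c l * Complex.exp (Complex.I *
            Complex.ofReal ((π / L) * multiDot l (v - (2:ℝ)⁻¹ • (q - ‖q‖ • σ)))))
       - (∑ m ∈ S, c m * Complex.exp (Complex.I *
            Complex.ofReal ((π / L) * multiDot m (v - q)))) *
         (∑ l ∈ S, c l * Complex.exp (Complex.I *
            Complex.ofReal ((π / L) * multiDot l v))))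
      * Complex.exp (-Complex.I * Complex.ofReal ((π / L) * multiDot k v))
    = ∑ l ∈ S, ∑ m ∈ S,
        A * (Complex.exp (-Complex.I * Complex.ofReal ((π / (2 * L)) * multiDot (l + m) q)
              + Complex.I * Complex.ofReal ((π / (2 * L)) * ‖q‖ * multiDot (l - m) σ))
           - Complex.exp (-Complex.I * Complex.ofReal ((π / L) * multiDot m q)))
          * (c l * c m * Complex.exp (Complex.I *
              Complex.ofReal ((π / L) * multiDot (l + m - k) v))) := by
  rw [Finset.sum_mul_sum, Finset.sum_mul_sum]
  rw [Finset.sum_comm (s := S) (t := S)]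
  rw [Finset.sum_comm (s := S) (t := S)
    (f := fun m l => (c m * Complex.exp (Complex.I *
            Complex.ofReal ((π / L) * multiDot m (v - q)))) *
          (c l * Complex.exp (Complex.I * Complex.ofReal ((π / L) * multiDot l v))))]
  simp only [← Finset.sum_sub_distrib, Finset.mul_sum, Finset.sum_mul]
  refine Finset.sum_congr rfl fun l _ => Finset.sum_congr rfl fun m _ => ?_
  have hgain : (c m * Complex.exp (Complex.I *
          Complex.ofReal ((π / L) * multiDot m (v - (2:ℝ)⁻¹ • (q + ‖q‖ • σ))))) *
        (c l * Complex.exp (Complex.I *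
          Complex.ofReal ((π / L) * multiDot l (v - (2:ℝ)⁻¹ • (q - ‖q‖ • σ)))))
        * Complex.exp (-Complex.I * Complex.ofReal ((π / L) * multiDot k v))
      = Complex.exp (-Complex.I * Complex.ofReal ((π / (2 * L)) * multiDot (l + m) q)
            + Complex.I * Complex.ofReal ((π / (2 * L)) * ‖q‖ * multiDot (l - m) σ))
        * (c l * c m * Complex.exp (Complex.I *
            Complex.ofReal ((π / L) * multiDot (l + m - k) v))) := by
    have e1 : (c m * Complex.exp (Complex.I *
          Complex.ofReal ((π / L) * multiDot m (v - (2:ℝ)⁻¹ • (q + ‖q‖ • σ))))) *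
        (c l * Complex.exp (Complex.I *
          Complex.ofReal ((π / L) * multiDot l (v - (2:ℝ)⁻¹ • (q - ‖q‖ • σ)))))
        * Complex.exp (-Complex.I * Complex.ofReal ((π / L) * multiDot k v))
        = c l * c m * Complex.exp (
            Complex.I * Complex.ofReal ((π / L) * multiDot m (v - (2:ℝ)⁻¹ • (q + ‖q‖ • σ)))
          + Complex.I * Complex.ofReal ((π / L) * multiDot l (v - (2:ℝ)⁻¹ • (q - ‖q‖ • σ)))
          + -Complex.I * Complex.ofReal ((π / L) * multiDot k v)) := by
      conv_rhs => rw [Complex.exp_add, Complex.exp_add]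
      ring
    have e2 : Complex.exp (-Complex.I * Complex.ofReal ((π / (2 * L)) * multiDot (l + m) q)
            + Complex.I * Complex.ofReal ((π / (2 * L)) * ‖q‖ * multiDot (l - m) σ))
        * (c l * c m * Complex.exp (Complex.I *
            Complex.ofReal ((π / L) * multiDot (l + m - k) v)))
        = c l * c m * Complex.exp (
            (-Complex.I * Complex.ofReal ((π / (2 * L)) * multiDot (l + m) q)
            + Complex.I * Complex.ofReal ((π / (2 * L)) * ‖q‖ * multiDot (l - m) σ))
          + Complex.I * Complex.ofReal ((π / L) * multiDot (l + m - k) v)) := by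
      conv_rhs => rw [Complex.exp_add]
      ring
    rw [e1, e2]
    congr 1
    rw [multiDot_sub_right, multiDot_sub_right, multiDot_smul_right, multiDot_smul_right,
      multiDot_add_right, multiDot_sub_right (w := ‖q‖ • σ), multiDot_smul_right,
      multiDot_smul_right, multiDot_add_left, multiDot_sub_left,
      show multiDot (l + m - k) v = multiDot l v + multiDot m v - multiDot k v by
        rw [multiDot_sub_left, multiDot_add_left]]
    push_cast
    ring
  have hloss : (c m * Complex.exp (Complex.I *
          Complex.ofReal ((π / L) * multiDot m (v - q)))) *
        (c l * Complex.exp (Complex.I * Complex.ofReal ((π / L) * multiDot l v)))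
        * Complex.exp (-Complex.I * Complex.ofReal ((π / L) * multiDot k v))
      = Complex.exp (-Complex.I * Complex.ofReal ((π / L) * multiDot m q))
        * (c l * c m * Complex.exp (Complex.I *
            Complex.ofReal ((π / L) * multiDot (l + m - k) v))) := by
    have e1 : (c m * Complex.exp (Complex.I *
          Complex.ofReal ((π / L) * multiDot m (v - q)))) *
        (c l * Complex.exp (Complex.I * Complex.ofReal ((π / L) * multiDot l v)))
        * Complex.exp (-Complex.I * Complex.ofReal ((π / L) * multiDot k v))
        = c l * c m * Complex.exp (
            Complex.I * Complex.ofReal ((π / L) * multiDot m (v - q))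
          + Complex.I * Complex.ofReal ((π / L) * multiDot l v)
          + -Complex.I * Complex.ofReal ((π / L) * multiDot k v)) := by
      conv_rhs => rw [Complex.exp_add, Complex.exp_add]
      ring
    have e2 : Complex.exp (-Complex.I * Complex.ofReal ((π / L) * multiDot m q))
        * (c l * c m * Complex.exp (Complex.I *
            Complex.ofReal ((π / L) * multiDot (l + m - k) v)))
        = c l * c m * Complex.exp (
            -Complex.I * Complex.ofReal ((π / L) * multiDot m q)
          + Complex.I * Complex.ofReal ((π / L) * multiDot (l + m - k) v)) := by
      conv_rhs => rw [Complex.exp_add]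
      ring
    rw [e1, e2]
    congr 1
    rw [multiDot_sub_right,
      show multiDot (l + m - k) v = multiDot l v + multiDot m v - multiDot k v by
        rw [multiDot_sub_left, multiDot_add_left]]
    push_cast
    ring
  calc A * ((c m * Complex.exp (Complex.I *
          Complex.ofReal ((π / L) * multiDot m (v - (2:ℝ)⁻¹ • (q + ‖q‖ • σ))))) *
        (c l * Complex.exp (Complex.I *
          Complex.ofReal ((π / L) * multiDot l (v - (2:ℝ)⁻¹ • (q - ‖q‖ • σ)))))
       - (c m * Complex.exp (Complex.I *
          Complex.ofReal ((π / L) * multiDot m (v - q)))) *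
        (c l * Complex.exp (Complex.I * Complex.ofReal ((π / L) * multiDot l v))))
        * Complex.exp (-Complex.I * Complex.ofReal ((π / L) * multiDot k v))
      = A * ((c m * Complex.exp (Complex.I *
          Complex.ofReal ((π / L) * multiDot m (v - (2:ℝ)⁻¹ • (q + ‖q‖ • σ))))) *
        (c l * Complex.exp (Complex.I *
          Complex.ofReal ((π / L) * multiDot l (v - (2:ℝ)⁻¹ • (q - ‖q‖ • σ)))))
        * Complex.exp (-Complex.I * Complex.ofReal ((π / L) * multiDot k v))
       - (c m * Complex.exp (Complex.I *
          Complex.ofReal ((π / L) * multiDot m (v - q)))) *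
        (c l * Complex.exp (Complex.I * Complex.ofReal ((π / L) * multiDot l v)))
        * Complex.exp (-Complex.I * Complex.ofReal ((π / L) * multiDot k v))) := by ring
    _ = _ := by rw [hgain, hloss]; ring



lemma norm_exp_I_mulr (a : ℝ) : ‖Complex.exp (Complex.I * (a : ℂ))‖ = 1 :=
  norm_exp_I_re_zero _ (by simp)

lemma norm_exp_neg_I_mul (a : ℝ) : ‖Complex.exp (-Complex.I * (a : ℂ))‖ = 1 :=
  norm_exp_I_re_zero _ (by simp)

lemma norm_exp_neg_add (a b : ℝ) :
    ‖Complex.exp (-Complex.I * (a : ℂ) + Complex.I * (b : ℂ))‖ = 1 :=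
  norm_exp_I_re_zero _ (by simp)

end Aux

/-- The Fourier–Galerkin spectral representation of the truncated Boltzmann collision
operator: for a trigonometric polynomial `f_N(v) = ∑_{‖k‖_∞ ≤ N/2} c_k e^{i(π/L)k·v}`,
the `k`-th Fourier coefficient of
`Q^R(f_N,f_N)(v) = ∫_{B_R}∫_{𝕊^{d-1}} Φ(|q|) b(σ·q̂)[f_N(v_*')f_N(v') − f_N(v−q)f_N(v)] dσ dq`
(with `v' = v − (q − |q|σ)/2`, `v_*' = v − (q + |q|σ)/2`) equals
`∑_{l+m=k} G(l,m) c_l c_m` with the weight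
`G(l,m) = ∫_{B_R}∫_{𝕊^{d-1}} Φ(|q|) b(σ·q̂)
  [e^{−i(π/2L)(l+m)·q + i(π/2L)|q|(l−m)·σ} − e^{−i(π/L)m·q}] dσ dq`. -/
theorem fourier_galerkin_coefficient_boltzmann
    (d : ℕ) (hd : 2 ≤ d) (L R : ℝ) (hL : 0 < L) (hR : 0 < R)
    (N : ℕ) (hN_even : Even N) (hN_pos : 0 < N)
    (Φ : ℝ → ℝ) (hΦ : ContinuousOn Φ (Set.Icc 0 R))
    (b : ℝ → ℝ) (hb_meas : Measurable b)
    (hb_bdd : ∃ C : ℝ, ∀ x ∈ Set.Icc (-1 : ℝ) 1, |b x| ≤ C)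
    (c : (Fin d → ℤ) → ℂ)
    (fN : EuclideanSpace ℝ (Fin d) → ℂ)
    (hfN : ∀ v, fN v = ∑ k ∈ spectralModes d N,
      c k * Complex.exp (Complex.I * Complex.ofReal ((π / L) * multiDot k v)))
    (Q : EuclideanSpace ℝ (Fin d) → ℂ)
    (hQ : ∀ v, Q v = ∫ q in Metric.closedBall (0 : EuclideanSpace ℝ (Fin d)) R,
      ∫ σ : Metric.sphere (0 : EuclideanSpace ℝ (Fin d)) 1,
        (Φ ‖q‖ : ℂ) * (b (⟪(σ : EuclideanSpace ℝ (Fin d)), q⟫ / ‖q‖) : ℂ) *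
          (fN (v - (2:ℝ)⁻¹ • (q + ‖q‖ • (σ : EuclideanSpace ℝ (Fin d)))) *
            fN (v - (2:ℝ)⁻¹ • (q - ‖q‖ • (σ : EuclideanSpace ℝ (Fin d))))
          - fN (v - q) * fN v)
        ∂((volume : Measure (EuclideanSpace ℝ (Fin d))).toSphere))
    (G : (Fin d → ℤ) → (Fin d → ℤ) → ℂ)
    (hG : ∀ l m, G l m = ∫ q in Metric.closedBall (0 : EuclideanSpace ℝ (Fin d)) R,
      ∫ σ : Metric.sphere (0 : EuclideanSpace ℝ (Fin d)) 1,
        (Φ ‖q‖ : ℂ) * (b (⟪(σ : EuclideanSpace ℝ (Fin d)), q⟫ / ‖q‖) : ℂ) *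
          (Complex.exp (-Complex.I * Complex.ofReal ((π / (2 * L)) * multiDot (l + m) q)
              + Complex.I * Complex.ofReal ((π / (2 * L)) * ‖q‖ *
                  multiDot (l - m) (σ : EuclideanSpace ℝ (Fin d))))
          - Complex.exp (-Complex.I * Complex.ofReal ((π / L) * multiDot m q)))
        ∂((volume : Measure (EuclideanSpace ℝ (Fin d))).toSphere)) :
    ∀ k ∈ spectralModes d N,
      (1 / (2 * L) ^ d : ℂ) *
        ∫ v in {v : EuclideanSpace ℝ (Fin d) | ∀ j, |v j| ≤ L},
          Q v * Complex.exp (-Complex.I * Complex.ofReal ((π / L) * multiDot k v))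
      = ∑ l ∈ spectralModes d N, ∑ m ∈ spectralModes d N,
          if l + m = k then G l m * c l * c m else 0 := by
  intro k hk
  classical
  obtain ⟨C₀, hC₀⟩ := hb_bdd
  set C := max C₀ 0 with hCdef
  have hC : ∀ x ∈ Set.Icc (-1:ℝ) 1, |b x| ≤ C := fun x hx => (hC₀ x hx).trans (le_max_left _ _)
  have hCnn : (0:ℝ) ≤ C := le_max_right _ _
  -- clamped kernel
  set Φ' : ℝ → ℝ := fun r => Φ (max 0 (min r R)) with hΦ'def
  have hclamp_mem : ∀ r : ℝ, max 0 (min r R) ∈ Set.Icc (0:ℝ) R := fun r =>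
    ⟨le_max_left _ _, max_le hR.le (min_le_right _ _)⟩
  have hΦ'c : Continuous Φ' :=
    hΦ.comp_continuous (continuous_const.max (continuous_id.min continuous_const)) hclamp_mem
  have hΦ'eq : ∀ q : EuclideanSpace ℝ (Fin d),
      q ∈ Metric.closedBall (0 : EuclideanSpace ℝ (Fin d)) R → Φ ‖q‖ = Φ' ‖q‖ := by
    intro q hq
    have h1 : ‖q‖ ≤ R := by rwa [Metric.mem_closedBall, dist_zero_right] at hq
    rw [hΦ'def]
    simp only
    rw [min_eq_left h1, max_eq_right (norm_nonneg q)]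
  obtain ⟨M₀, hM₀⟩ := (isCompact_Icc (a := (0:ℝ)) (b := R)).exists_bound_of_continuousOn
    hΦ'c.continuousOn
  set M := max M₀ 0 with hMdef
  have hM : ∀ r : ℝ, |Φ' r| ≤ M := by
    intro r
    have h2 : Φ' r = Φ' (max 0 (min r R)) := by
      rw [hΦ'def]
      simp only
      congr 1
      rcases hclamp_mem r with ⟨h3, h4⟩
      rw [min_eq_left h4, max_eq_right h3]
    rw [h2, ← Real.norm_eq_abs]
    exact (hM₀ _ (hclamp_mem r)).trans (le_max_left _ _)
  have hMnn : (0:ℝ) ≤ M := le_max_right _ _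
  -- inner product argument always lies in [-1,1]
  have harg : ∀ (q : EuclideanSpace ℝ (Fin d))
      (σ : Metric.sphere (0 : EuclideanSpace ℝ (Fin d)) 1),
      ⟪(σ : EuclideanSpace ℝ (Fin d)), q⟫ / ‖q‖ ∈ Set.Icc (-1:ℝ) 1 := by
    intro q σ
    rcases eq_or_ne q 0 with rfl | hq
    · simp
    · have hq' : (0:ℝ) < ‖q‖ := norm_pos_iff.mpr hq
      have h1 : |⟪(σ : EuclideanSpace ℝ (Fin d)), q⟫| ≤ ‖q‖ := by
        have h := abs_real_inner_le_norm (σ : EuclideanSpace ℝ (Fin d)) q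
        rwa [norm_eq_of_mem_sphere σ, one_mul] at h
      rw [Set.mem_Icc, ← abs_le, abs_div, abs_of_pos hq']
      exact (div_le_one hq').mpr h1
  -- notation
  set μs := ((volume : Measure (EuclideanSpace ℝ (Fin d))).toSphere) with hμs
  set B := Metric.closedBall (0 : EuclideanSpace ℝ (Fin d)) R with hB
  set S := spectralModes d N with hS
  simp only [hfN] at hQ
  -- the per-mode kernel integrand
  set T : (Fin d → ℤ) → (Fin d → ℤ) → EuclideanSpace ℝ (Fin d) →
      Metric.sphere (0 : EuclideanSpace ℝ (Fin d)) 1 → ℂ := fun l m q σ =>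
    (Φ' ‖q‖ : ℂ) * (b (⟪(σ : EuclideanSpace ℝ (Fin d)), q⟫ / ‖q‖) : ℂ) *
      (Complex.exp (-Complex.I * Complex.ofReal ((π / (2 * L)) * multiDot (l + m) q)
          + Complex.I * Complex.ofReal ((π / (2 * L)) * ‖q‖ *
              multiDot (l - m) (σ : EuclideanSpace ℝ (Fin d))))
      - Complex.exp (-Complex.I * Complex.ofReal ((π / L) * multiDot m q))) with hTdef
  have hTnorm : ∀ l m q σ, ‖T l m q σ‖ ≤ M * C * 2 := by
    intro l m q σ
    rw [hTdef]
    simp only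
    rw [norm_mul, norm_mul, Complex.norm_real, Complex.norm_real]
    have h1 : ‖Φ' ‖q‖‖ ≤ M := by rw [Real.norm_eq_abs]; exact hM _
    have h2 : ‖b (⟪(σ : EuclideanSpace ℝ (Fin d)), q⟫ / ‖q‖)‖ ≤ C := by
      rw [Real.norm_eq_abs]; exact hC _ (harg q σ)
    have h3 : ‖Complex.exp (-Complex.I * Complex.ofReal ((π / (2 * L)) * multiDot (l + m) q)
          + Complex.I * Complex.ofReal ((π / (2 * L)) * ‖q‖ *
              multiDot (l - m) (σ : EuclideanSpace ℝ (Fin d))))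
      - Complex.exp (-Complex.I * Complex.ofReal ((π / L) * multiDot m q))‖ ≤ 2 := by
      refine (norm_sub_le _ _).trans ?_
      rw [norm_exp_neg_add, norm_exp_neg_I_mul]
      norm_num
    exact mul_le_mul (mul_le_mul h1 h2 (norm_nonneg _) hMnn) h3 (norm_nonneg _)
      (mul_nonneg hMnn hCnn)
  have hTmeas : ∀ l m, StronglyMeasurable (Function.uncurry (T l m)) := by
    intro l m
    rw [hTdef]
    apply Measurable.stronglyMeasurable
    refine Measurable.mul (Measurable.mul ?_ ?_) ?_
    · exact Complex.measurable_ofReal.comp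
        ((hΦ'c.comp continuous_norm).comp continuous_fst).measurable
    · refine Complex.measurable_ofReal.comp (hb_meas.comp ?_)
      refine Measurable.div ?_ ?_
      · exact (continuous_inner.comp
          ((continuous_subtype_val.comp continuous_snd).prodMk continuous_fst)).measurable
      · exact (continuous_norm.comp continuous_fst).measurable
    · refine Continuous.measurable ?_
      refine Continuous.sub ?_ ?_
      · refine Complex.continuous_exp.comp (Continuous.add ?_ ?_)
        · exact continuous_const.mul (Complex.continuous_ofReal.comp
            (continuous_const.mul ((continuous_multiDot _).comp continuous_fst)))
        · exact continuous_const.mul (Complex.continuous_ofReal.comp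
            ((continuous_const.mul (continuous_norm.comp continuous_fst)).mul
              ((continuous_multiDot _).comp (continuous_subtype_val.comp continuous_snd))))
      · exact Complex.continuous_exp.comp (continuous_const.mul
          (Complex.continuous_ofReal.comp
            (continuous_const.mul ((continuous_multiDot _).comp continuous_fst))))
  have hTσint : ∀ l m q, Integrable (fun σ => T l m q σ) μs := by
    intro l m q
    refine Integrable.mono' (integrable_const (M * C * 2))
      ((hTmeas l m).comp_measurable measurable_prodMk_left).aestronglyMeasurable
      (Filter.Eventually.of_forall fun σ => hTnorm l m q σ)
  have hJmeas : ∀ l m, StronglyMeasurable (fun q => ∫ σ, T l m q σ ∂μs) :=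
    fun l m => (hTmeas l m).integral_prod_right
  haveI hBfin : IsFiniteMeasure ((volume : Measure (EuclideanSpace ℝ (Fin d))).restrict B) :=
    ⟨by rw [Measure.restrict_apply_univ]; exact measure_closedBall_lt_top⟩
  have hJint : ∀ l m, IntegrableOn (fun q => ∫ σ, T l m q σ ∂μs) B := by
    intro l m
    refine Integrable.mono' (integrable_const (M * C * 2 * (μs Set.univ).toReal))
      ((hJmeas l m).aestronglyMeasurable) (Filter.Eventually.of_forall fun q => ?_)
    exact norm_integral_le_of_norm_le_const
      (Filter.Eventually.of_forall fun σ => hTnorm l m q σ)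
  -- key pointwise identity in `v`
  have hQW : ∀ v : EuclideanSpace ℝ (Fin d),
      Q v * Complex.exp (-Complex.I * Complex.ofReal ((π / L) * multiDot k v))
      = ∑ l ∈ S, ∑ m ∈ S, (∫ q in B, ∫ σ, T l m q σ ∂μs) *
          (c l * c m * Complex.exp (Complex.I *
            Complex.ofReal ((π / L) * multiDot (l + m - k) v))) := by
    intro v
    rw [hQ v, ← MeasureTheory.integral_mul_const]
    have hq1 : ∀ q ∈ B,
        (∫ σ : Metric.sphere (0 : EuclideanSpace ℝ (Fin d)) 1,
          (Φ ‖q‖ : ℂ) * (b (⟪(σ : EuclideanSpace ℝ (Fin d)), q⟫ / ‖q‖) : ℂ) *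
            ((∑ k' ∈ S, c k' * Complex.exp (Complex.I * Complex.ofReal ((π / L) *
                multiDot k' (v - (2:ℝ)⁻¹ • (q + ‖q‖ • (σ : EuclideanSpace ℝ (Fin d))))))) *
              (∑ k' ∈ S, c k' * Complex.exp (Complex.I * Complex.ofReal ((π / L) *
                multiDot k' (v - (2:ℝ)⁻¹ • (q - ‖q‖ • (σ : EuclideanSpace ℝ (Fin d))))))) -
              (∑ k' ∈ S, c k' * Complex.exp (Complex.I * Complex.ofReal ((π / L) *
                multiDot k' (v - q)))) *
              (∑ k' ∈ S, c k' * Complex.exp (Complex.I * Complex.ofReal ((π / L) *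
                multiDot k' v)))) ∂μs) *
          Complex.exp (-Complex.I * Complex.ofReal ((π / L) * multiDot k v))
        = ∑ l ∈ S, ∑ m ∈ S, (∫ σ, T l m q σ ∂μs) *
            (c l * c m * Complex.exp (Complex.I *
              Complex.ofReal ((π / L) * multiDot (l + m - k) v))) := by
      intro q hq
      rw [← MeasureTheory.integral_mul_const]
      trans (∫ σ : Metric.sphere (0 : EuclideanSpace ℝ (Fin d)) 1,
        (∑ l ∈ S, ∑ m ∈ S, T l m q σ *
          (c l * c m * Complex.exp (Complex.I *
            Complex.ofReal ((π / L) * multiDot (l + m - k) v)))) ∂μs)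
      · refine integral_congr_ae (Filter.Eventually.of_forall fun σ => ?_)
        rw [hΦ'eq q hq]
        simp only [hTdef]
        exact expand_point L hL S c _ k v q (σ : EuclideanSpace ℝ (Fin d))
      · rw [MeasureTheory.integral_finset_sum _ (fun l _ =>
          integrable_finset_sum _ (fun m _ => (hTσint l m q).mul_const _))]
        refine Finset.sum_congr rfl fun l _ => ?_
        rw [MeasureTheory.integral_finset_sum _ (fun m _ => (hTσint l m q).mul_const _)]
        exact Finset.sum_congr rfl fun m _ => MeasureTheory.integral_mul_const _ _
    rw [MeasureTheory.setIntegral_congr_fun measurableSet_closedBall hq1]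
    rw [MeasureTheory.integral_finset_sum _ (fun l _ =>
      integrable_finset_sum _ (fun m _ => (hJint l m).mul_const _))]
    refine Finset.sum_congr rfl fun l _ => ?_
    rw [MeasureTheory.integral_finset_sum _ (fun m _ => (hJint l m).mul_const _)]
    exact Finset.sum_congr rfl fun m _ => MeasureTheory.integral_mul_const _ _
  -- identify the weights with G
  have hGT : ∀ l m, G l m = ∫ q in B, ∫ σ, T l m q σ ∂μs := by
    intro l m
    rw [hG l m]
    refine MeasureTheory.setIntegral_congr_fun measurableSet_closedBall fun q hq => ?_
    refine integral_congr_ae (Filter.Eventually.of_forall fun σ => ?_)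
    rw [hΦ'eq q hq]
  -- the cube has finite measure
  have hCubeFin : (volume : Measure (EuclideanSpace ℝ (Fin d)))
      {v : EuclideanSpace ℝ (Fin d) | ∀ j, |v j| ≤ L} < ⊤ := by
    refine lt_of_le_of_lt (measure_mono ?_)
      (measure_closedBall_lt_top (x := (0 : EuclideanSpace ℝ (Fin d))) (r := Real.sqrt d * L))
    intro v hv
    rw [Metric.mem_closedBall, dist_zero_right, EuclideanSpace.norm_eq]
    have h1 : ∑ j, ‖v j‖ ^ 2 ≤ ∑ _j : Fin d, L ^ 2 := by
      refine Finset.sum_le_sum fun j _ => ?_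
      rw [Real.norm_eq_abs]
      exact pow_le_pow_left₀ (abs_nonneg _) (hv j) 2
    refine (Real.sqrt_le_sqrt h1).trans ?_
    rw [Finset.sum_const, Finset.card_univ, Fintype.card_fin, nsmul_eq_mul,
      Real.sqrt_mul (Nat.cast_nonneg d), Real.sqrt_sq hL.le]
  haveI : IsFiniteMeasure ((volume : Measure (EuclideanSpace ℝ (Fin d))).restrict
      {v : EuclideanSpace ℝ (Fin d) | ∀ j, |v j| ≤ L}) :=
    ⟨by rwa [Measure.restrict_apply_univ]⟩
  have hIntCube : ∀ (A : ℂ) (n : Fin d → ℤ), Integrable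
      (fun v : EuclideanSpace ℝ (Fin d) => A * Complex.exp (Complex.I *
        Complex.ofReal ((π / L) * multiDot n v)))
      ((volume : Measure (EuclideanSpace ℝ (Fin d))).restrict
        {v : EuclideanSpace ℝ (Fin d) | ∀ j, |v j| ≤ L}) := by
    intro A n
    refine Integrable.mono' (integrable_const ‖A‖) ?_ (Filter.Eventually.of_forall fun v => ?_)
    · exact (continuous_const.mul (Complex.continuous_exp.comp (continuous_const.mul
        (Complex.continuous_ofReal.comp (continuous_const.mul
          (continuous_multiDot n)))))).aestronglyMeasurable
    · rw [norm_mul, norm_exp_I_mulr, mul_one]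
  -- put everything together
  simp only [hQW]
  simp only [← mul_assoc]
  rw [MeasureTheory.integral_finset_sum _ (fun l _ =>
    integrable_finset_sum _ (fun m _ => hIntCube _ _)), Finset.mul_sum]
  refine Finset.sum_congr rfl fun l hl => ?_
  rw [MeasureTheory.integral_finset_sum _ (fun m _ => hIntCube _ _), Finset.mul_sum]
  refine Finset.sum_congr rfl fun m hm => ?_
  rw [MeasureTheory.integral_const_mul, cube_integral d L hL (l + m - k), ← hGT l m]
  by_cases h : l + m = k
  · rw [if_pos (sub_eq_zero.mpr h), if_pos h]
    have hz : ((2 : ℂ) * (L : ℂ)) ^ d ≠ 0 :=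
      pow_ne_zero _ (mul_ne_zero two_ne_zero (by exact_mod_cast hL.ne'))
    push_cast
    field_simp
  · rw [if_neg (fun h0 => h (sub_eq_zero.mp h0)), if_neg h, mul_zero, mul_zero]
end
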